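/- Any strict subset of masked ciphertexts reveals nothing about the corresponding partial sum: for a proper nonempty subset S ⊊ {1,…,n}, the distribution of (c_i)_{i∈S} with c_i = x_i + r_i (masks uniform subject to Σ r_i = 0) is uniform on G^{|S|}, hence the partial sum Σ_{i∈S} x_i is information-theoretically hidden. -/

import Mathlib

/-! The map `r ↦ (∑ i, r i, r|_S)` is a surjective homomorphism `G^n → G × G^S` as soon as some
index `j` lies outside `S` (correct the sum through `r j`), so all of its fibres have the same size
`|G|^n / (|G| · |G|^|S|)`. The masks matching the ciphertexts `v` on `S` form one such fibre, and
the admissible masks form a fibre of `r ↦ ∑ i, r i`, of size `|G|^n / |G|`. -/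

open Finset

theorem AddMonoidHom.card_fiber_mul_card_of_surjective {H K : Type*} [AddGroup H] [Fintype H]
    [AddMonoid K] [Fintype K] [DecidableEq K] (f : H →+ K) (hf : Function.Surjective f) (k : K) :
    #{h | f h = k} * Fintype.card K = Fintype.card H := by
  calc #{h | f h = k} * Fintype.card K = ∑ k' : K, #{h | f h = k'} := by
        rw [sum_congr rfl fun k' _ => card_fiber_eq_of_mem_range f (hf k') (hf k), sum_const,
          card_univ, smul_eq_mul, mul_comm]
    _ = Fintype.card H := (card_eq_sum_card_fiberwise fun _ _ => mem_univ _).symm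

section

variable {ι G : Type*} [Fintype ι] [AddCommGroup G]

def sumRestrict (S : Finset ι) : (ι → G) →+ G × (S → G) where
  toFun r := (∑ i, r i, fun i => r i)
  map_zero' := by ext <;> simp
  map_add' r s := by ext <;> simp [sum_add_distrib]

theorem sumRestrict_surjective [DecidableEq ι] {S : Finset ι} {j : ι} (hj : j ∉ S) :
    Function.Surjective (sumRestrict (G := G) S) := by
  rintro ⟨a, w⟩
  let r₀ : ι → G := fun i => if h : i ∈ S then w ⟨i, h⟩ else 0
  refine ⟨r₀ + Pi.single j (a - ∑ i, r₀ i), Prod.ext ?_ (funext fun i => ?_)⟩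
  · simp [sumRestrict, sum_add_distrib]
  · have : (i : ι) ≠ j := fun h => hj (h ▸ i.2)
    simp [sumRestrict, r₀, this]

end

theorem stmt_19_general {G : Type*} [AddCommGroup G] [Fintype G] [DecidableEq G]
    (n : ℕ) (x : Fin n → G)
    (S : Finset (Fin n)) (hS' : S ≠ Finset.univ) :
    ∀ v : Fin n → G,
      ((Finset.univ.filter (fun r : Fin n → G =>
          (∑ i, r i = 0) ∧ ∀ i ∈ S, x i + r i = v i)).card)
          * Fintype.card G ^ S.card =
        (Finset.univ.filter (fun r : Fin n → G => ∑ i, r i = 0)).card := by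
  intro v
  obtain ⟨j, hj⟩ : ∃ j, j ∉ S := by simpa [eq_univ_iff_forall] using hS'
  have hf := sumRestrict_surjective (G := G) hj
  have hfiber : univ.filter (fun r : Fin n → G => (∑ i, r i = 0) ∧ ∀ i ∈ S, x i + r i = v i)
      = univ.filter (fun r => sumRestrict S r = ((0 : G), fun i : S => v i - x i)) := by
    refine filter_congr fun r _ => ?_
    simp [sumRestrict, Prod.ext_iff, funext_iff, eq_sub_iff_add_eq']
  have hmasks := ((AddMonoidHom.fst G (S → G)).comp
    (sumRestrict S)).card_fiber_mul_card_of_surjective (Prod.fst_surjective.comp hf) 0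
  have hciphers := (sumRestrict S).card_fiber_mul_card_of_surjective hf
    ((0 : G), fun i : S => v i - x i)
  rw [← hfiber, Fintype.card_prod, Fintype.card_fun, Fintype.card_coe] at hciphers
  refine Nat.eq_of_mul_eq_mul_right (Fintype.card_pos (α := G)) ?_
  rw [mul_assoc, mul_comm _ (Fintype.card G), hciphers]
  exact hmasks.symm

/-- Any strict subset of masked ciphertexts reveals nothing: for a nonempty proper subset
`S ⊊ {1,…,n}`, the ciphertexts `(c i)_{i ∈ S}` with `c i = x i + r i` (masks uniform on
`{r : ∑ i, r i = 0}`) are jointly uniform on `G^|S|`: every target tuple `v` is hit by the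
same fraction `1/|G|^|S|` of masks, independently of the inputs `x`; hence the partial sum
`∑_{i∈S} x i` is information-theoretically hidden. -/
theorem stmt_19 {G : Type*} [AddCommGroup G] [Fintype G] [DecidableEq G]
    (n : ℕ) (hn : 2 ≤ n) (x : Fin n → G)
    (S : Finset (Fin n)) (hS : S.Nonempty) (hS' : S ≠ Finset.univ) :
    ∀ v : Fin n → G,
      ((Finset.univ.filter (fun r : Fin n → G =>
          (∑ i, r i = 0) ∧ ∀ i ∈ S, x i + r i = v i)).card)
          * Fintype.card G ^ S.card =
        (Finset.univ.filter (fun r : Fin n → G => ∑ i, r i = 0)).card :=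
  stmt_19_general n x S hS'
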